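/- Let n ≥ 2, d ≥ 1, and let p : {1,…,n} × {1,…,n} → ℝ^d, h ∈ ℝ^d, K, Q ∈ ℝ^{d×d}, and 𝒩 : ℝ^d → ℝ be arbitrary, and suppose the resulting 1-layer single-token output transformer T computes comp_n on all inputs. For a ∈ {2,…,n}, define x(a) = e^{⟨K p(1,a), Q h⟩} · p(1,a) ∈ ℝ^d and s(a) = e^{⟨K p(1,a), Q h⟩} ∈ ℝ. Then the hypothesis class H = { (x, s) ↦ 𝟙[𝒩(h + (x + y)/(s + q)) > 0] : (y, q) ∈ ℝ^d × ℝ } over domain ℝ^d × ℝ shatters the n − 1 points (x(2), s(2)), …, (x(n), s(n)); that is, for every δ : {2,…,n} → {0,1} there exist (y, q) ∈ ℝ^d × ℝ such that for all a ∈ {2,…,n}: 𝒩(h + (x(a) + y)/(s(a) + q)) > 0 if and only if δ(a) = 1. In particular, H has VC dimension at least n − 1. -/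

import Mathlib

/-- A 1-layer single-token output transformer of embedding dimension `d`
for input length `n` and alphabet `S`: a positional encoding `p`, an initial
value vector `h` of the output token, key and query matrices `K`, `Q`,
and an output function `N`. -/
structure Transformer (n d : ℕ) (S : Type*) where
  /-- positional encoding -/
  p : Fin n → S → (Fin d → ℝ)
  /-- initial value vector of the output token -/
  h : Fin d → ℝ
  /-- key matrix -/
  K : Matrix (Fin d) (Fin d) ℝ
  /-- query matrix -/
  Q : Matrix (Fin d) (Fin d) ℝ
  /-- output function -/
  N : (Fin d → ℝ) → ℝ

/-- The attention weight `e^{⟨K f_i, Q h⟩}` of input token `i`, where `f_i = p(i, x_i)`. -/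
noncomputable def Transformer.w {n d : ℕ} {S : Type*} (T : Transformer n d S)
    (x : Fin n → S) (i : Fin n) : ℝ :=
  Real.exp (dotProduct (T.K.mulVec (T.p i (x i))) (T.Q.mulVec T.h))

/-- The output of the transformer on input `x`: it computes the softmax average
`ĥ = (Σ_i e^{⟨K f_i, Q h⟩} f_i) / (Σ_i e^{⟨K f_i, Q h⟩})` and outputs `1` if
`N (h + ĥ) > 0`, and `0` otherwise. -/
noncomputable def Transformer.output {n d : ℕ} {S : Type*} (T : Transformer n d S)
    (x : Fin n → S) : ℕ :=
  if 0 < T.N (T.h + (∑ i, T.w x i)⁻¹ • ∑ i, T.w x i • T.p i (x i)) then 1 else 0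

/-- `IsMLP din dout F m` : the function `F : ℝ^din → ℝ^dout` is computable by a
feedforward circuit composing affine maps over `ℝ` and the coordinatewise ReLU
activation `t ↦ max (t, 0)`, using `m` ReLU gates in total. -/
inductive IsMLP : (din dout : ℕ) → ((Fin din → ℝ) → (Fin dout → ℝ)) → ℕ → Prop
  | affine {din dout : ℕ} (A : Matrix (Fin dout) (Fin din) ℝ) (b : Fin dout → ℝ) :
      IsMLP din dout (fun x => A.mulVec x + b) 0
  | relu (d : ℕ) : IsMLP d d (fun x i => max (x i) 0) d
  | comp {d₁ d₂ d₃ m₁ m₂ : ℕ} {f : (Fin d₁ → ℝ) → (Fin d₂ → ℝ)}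
      {g : (Fin d₂ → ℝ) → (Fin d₃ → ℝ)} :
      IsMLP d₁ d₂ f m₁ → IsMLP d₂ d₃ g m₂ → IsMLP d₁ d₃ (g ∘ f) (m₁ + m₂)

/-- `N : ℝ^d → ℝ` is a ReLU MLP with `m` ReLU neurons. -/
def IsReLUMLP (d m : ℕ) (N : (Fin d → ℝ) → ℝ) : Prop :=
  ∃ F : (Fin d → ℝ) → (Fin 1 → ℝ), IsMLP d 1 F m ∧ ∀ v, N v = F v 0

/-- The composition function `comp_n` : the alphabet `{1, …, n}` is modelled as `Fin n`
(index `i` standing for the symbol `i + 1`); with `φ = a`, the output is `1` if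
`φ(φ(1)) = 1` and `0` otherwise. -/
def comp {n : ℕ} (a : Fin n → Fin n) : ℕ :=
  if h : 0 < n then (if a (a ⟨0, h⟩) = ⟨0, h⟩ then 1 else 0) else 0

/-! Fix the tokens at positions `2, …, n` so that `φ(a) = 1` exactly when `δ a = 1`.
On the input whose first token is `a`, the output is then `comp_n = 𝟙[δ a = 1]`, while the
softmax average splits into the first token's contribution `(x(a), s(a))` and a contribution
`(y, q)` of the remaining tokens that does not depend on `a`. -/

namespace Transformer

variable {n d : ℕ} {S : Type*} (T : Transformer n d S)

noncomputable def tokenWeight (i : Fin n) (s : S) : ℝ :=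
  Real.exp (dotProduct (T.K.mulVec (T.p i s)) (T.Q.mulVec T.h))

noncomputable def restWeight (x : Fin n → S) (i₀ : Fin n) : ℝ :=
  ∑ i ∈ Finset.univ.erase i₀, T.w x i

noncomputable def restValue (x : Fin n → S) (i₀ : Fin n) : Fin d → ℝ :=
  ∑ i ∈ Finset.univ.erase i₀, T.w x i • T.p i (x i)

theorem w_eq_tokenWeight (x : Fin n → S) (i : Fin n) : T.w x i = T.tokenWeight i (x i) := rfl

theorem w_update_of_ne {x : Fin n → S} {i₀ i : Fin n} (hi : i ≠ i₀) (s : S) :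
    T.w (Function.update x i₀ s) i = T.w x i := by
  simp only [w_eq_tokenWeight, Function.update_of_ne hi]

theorem restWeight_update (x : Fin n → S) (i₀ : Fin n) (s : S) :
    T.restWeight (Function.update x i₀ s) i₀ = T.restWeight x i₀ :=
  Finset.sum_congr rfl fun _ hi => T.w_update_of_ne (Finset.ne_of_mem_erase hi) s

theorem restValue_update (x : Fin n → S) (i₀ : Fin n) (s : S) :
    T.restValue (Function.update x i₀ s) i₀ = T.restValue x i₀ :=
  Finset.sum_congr rfl fun _ hi => by
    have hi' := Finset.ne_of_mem_erase hi
    rw [T.w_update_of_ne hi', Function.update_of_ne hi']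

theorem sum_w_update (x : Fin n → S) (i₀ : Fin n) (s : S) :
    ∑ i, T.w (Function.update x i₀ s) i = T.tokenWeight i₀ s + T.restWeight x i₀ := by
  rw [← Finset.add_sum_erase _ _ (Finset.mem_univ i₀), ← T.restWeight_update x i₀ s,
    w_eq_tokenWeight, Function.update_self, restWeight]

theorem sum_w_smul_update (x : Fin n → S) (i₀ : Fin n) (s : S) :
    ∑ i, T.w (Function.update x i₀ s) i • T.p i (Function.update x i₀ s i) =
      T.tokenWeight i₀ s • T.p i₀ s + T.restValue x i₀ := by
  rw [← Finset.add_sum_erase _ _ (Finset.mem_univ i₀), ← T.restValue_update x i₀ s,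
    w_eq_tokenWeight, Function.update_self, restValue]

theorem output_update (x : Fin n → S) (i₀ : Fin n) (s : S) :
    T.output (Function.update x i₀ s) =
      if 0 < T.N (T.h + (T.tokenWeight i₀ s + T.restWeight x i₀)⁻¹ •
          (T.tokenWeight i₀ s • T.p i₀ s + T.restValue x i₀)) then 1 else 0 := by
  rw [output, sum_w_update, sum_w_smul_update]

end Transformer

theorem comp_update_zero_of_ne {n : ℕ} (hn : 0 < n) (g : Fin n → Fin n) {a : Fin n}
    (ha : a ≠ ⟨0, hn⟩) :
    comp (Function.update g ⟨0, hn⟩ a) = if g a = ⟨0, hn⟩ then 1 else 0 := by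
  simp [comp, hn, ha]

theorem iff_of_ite_eq_ite {P Q : Prop} [Decidable P] [Decidable Q]
    (h : (if P then 1 else 0 : ℕ) = if Q then 1 else 0) : P ↔ Q := by
  by_cases P <;> by_cases Q <;> simp_all

/-- Let `n ≥ 2`, `d ≥ 1`, and let `p`, `h`, `K`, `Q`, `N` be arbitrary components of a
1-layer single-token output transformer computing `comp_n` on all inputs.  For a symbol
`a` in `{2, …, n}` (modelled as `a : Fin n` with `1 ≤ a`), let
`x(a) = e^{⟨K p(1,a), Q h⟩} • p(1,a)` and `s(a) = e^{⟨K p(1,a), Q h⟩}`.  Then the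
hypothesis class `{(x, s) ↦ 𝟙[N (h + (x + y)/(s + q)) > 0] : (y, q) ∈ ℝ^d × ℝ}`
shatters the `n - 1` points `(x(a), s(a))`, `a ∈ {2, …, n}`: for every
`δ : {2, …, n} → {0, 1}` there exist `(y, q)` such that for all `a ∈ {2, …, n}`,
`N (h + (x(a) + y)/(s(a) + q)) > 0` iff `δ a = 1`.  In particular the class has
VC dimension at least `n - 1`. -/
theorem comp_transformer_shatters
    (n d : ℕ) (hn : 2 ≤ n)
    (p : Fin n → Fin n → (Fin d → ℝ)) (h : Fin d → ℝ)
    (K Q : Matrix (Fin d) (Fin d) ℝ) (N : (Fin d → ℝ) → ℝ)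
    (hT : ∀ x : Fin n → Fin n, (Transformer.mk p h K Q N).output x = comp x)
    (xv : Fin n → (Fin d → ℝ)) (sv : Fin n → ℝ)
    (hx : ∀ a : Fin n, xv a =
      Real.exp (dotProduct (K.mulVec (p ⟨0, by omega⟩ a)) (Q.mulVec h)) •
        p ⟨0, by omega⟩ a)
    (hs : ∀ a : Fin n, sv a =
      Real.exp (dotProduct (K.mulVec (p ⟨0, by omega⟩ a)) (Q.mulVec h))) :
    ∀ δ : Fin n → Fin 2, ∃ (y : Fin d → ℝ) (q : ℝ),
      ∀ a : Fin n, 1 ≤ (a : ℕ) →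
        (0 < N (h + (sv a + q)⁻¹ • (xv a + y)) ↔ δ a = 1) := by
  intro δ
  let T := Transformer.mk p h K Q N
  let i₀ : Fin n := ⟨0, by omega⟩
  let g : Fin n → Fin n := fun i => if δ i = 1 then i₀ else ⟨1, hn⟩
  refine ⟨T.restValue g i₀, T.restWeight g i₀, fun a ha => ?_⟩
  have ha₀ : a ≠ i₀ := Fin.ne_of_val_ne (by change (a : ℕ) ≠ 0; omega)
  have hga : g a = i₀ ↔ δ a = 1 := by
    by_cases hδ : δ a = 1 <;> simp [g, i₀, hδ]
  have hout := (T.output_update g i₀ a).symm.trans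
    ((hT _).trans (comp_update_zero_of_ne _ g ha₀))
  rw [hx a, hs a, ← hga]
  exact iff_of_ite_eq_ite hout
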